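/- Assume λ < L_g and set γ := λ/L_g ∈ (0,1). There exists a constant C > 0, depending only on λ, L_g, L_f and M_f (in particular independent of h), such that for every h with 0 < h < 1/λ and 1/h a positive integer, the bounded fixed point u^h of A^h is uniformly γ-Hölder continuous in the first variable: for all x, y ∈ ℝ^ν and a ∈ I_h, |u^h(x,a) − u^h(y,a)| ≤ C·‖x − y‖^γ. -/

import Mathlib

/-!
`A^h` is a contraction with factor `1 - λh`, so its fixed point is bounded by `M_f / λ`.
Unrolling the fixed-point equation `n` times along the controls that are optimal for `y`, and
using them also from `x`, gives for `t = n h`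
`|u(x,a) - u(y,a)| ≤ L_f (e^{(L_g - λ) t} - 1) / (L_g - λ) · ‖x - y‖ + 2 (M_f / λ) e^{-λ t}`:
trajectories separate at rate at most `L_g`, while the discount damps the remainder at rate `λ`.
Taking `t ≈ -log ‖x - y‖ / L_g` balances the two terms at `‖x - y‖ ^ (λ / L_g)`.
-/

noncomputable section

abbrev E (ν : ℕ) := EuclideanSpace ℝ (Fin ν)

/-- The discrete set of control values `I_h = {i·h : i = 0,…,N}`. -/
def Ih (h : ℝ) (N : ℕ) : Set ℝ := {r : ℝ | ∃ i : ℕ, i ≤ N ∧ r = i * h}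

/-- The discrete dynamic programming operator
`(A^h w)(x,a) = min_{b ∈ I_h, b ≥ a} [(1−λh)·w(x + h·g(x,a), b) + h·f(x,a)]`. -/
def Aop {ν : ℕ} (lam h : ℝ) (N : ℕ)
    (g : E ν → ℝ → E ν) (f : E ν → ℝ → ℝ)
    (w : E ν → ℝ → ℝ) (x : E ν) (a : ℝ) : ℝ :=
  sInf {v : ℝ | ∃ b ∈ Ih h N, a ≤ b ∧
    v = (1 - lam * h) * w (x + h • g x a) b + h * f x a}

open Real

lemma zero_mem_Ih (h : ℝ) (N : ℕ) : (0 : ℝ) ∈ Ih h N := ⟨0, N.zero_le, by simp⟩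

lemma Ih_finite (h : ℝ) (N : ℕ) : (Ih h N).Finite :=
  ((Set.finite_Iic N).image fun i : ℕ => (i : ℝ) * h).subset fun _ ⟨i, hi, hr⟩ => ⟨i, hi, hr.symm⟩

lemma Ih_subset_Icc {h : ℝ} {N : ℕ} (hh : 0 ≤ h) (hNh : (N : ℝ) * h = 1) :
    Ih h N ⊆ Set.Icc 0 1 := by
  rintro _ ⟨i, hi, rfl⟩
  exact ⟨by positivity, hNh ▸ mul_le_mul_of_nonneg_right (by exact_mod_cast hi) hh⟩

section Aop

variable {ν : ℕ} {lam h : ℝ} {N : ℕ} {g : E ν → ℝ → E ν} {f : E ν → ℝ → ℝ}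
  {w : E ν → ℝ → ℝ} {x : E ν} {a b : ℝ}

lemma finite_Aop_values : {v | ∃ b ∈ Ih h N, a ≤ b ∧
    v = (1 - lam * h) * w (x + h • g x a) b + h * f x a}.Finite :=
  ((Ih_finite h N).image _).subset fun _ ⟨b, hb, _, hv⟩ => ⟨b, hb, hv.symm⟩

lemma Aop_le (hb : b ∈ Ih h N) (hab : a ≤ b) :
    Aop lam h N g f w x a ≤ (1 - lam * h) * w (x + h • g x a) b + h * f x a := by
  refine csInf_le finite_Aop_values.bddBelow ?_
  exact ⟨b, hb, hab, rfl⟩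

lemma exists_Aop_eq (ha : a ∈ Ih h N) :
    ∃ b ∈ Ih h N, a ≤ b ∧
      Aop lam h N g f w x a = (1 - lam * h) * w (x + h • g x a) b + h * f x a := by
  refine Set.Nonempty.csInf_mem ?_ finite_Aop_values
  exact ⟨_, a, ha, le_rfl, rfl⟩

end Aop

lemma le_div_one_sub_of_forall_le_imp_le_mul_add {α : Type*} {φ : α → ℝ} {c d M : ℝ}
    (hc0 : 0 ≤ c) (hc1 : c < 1) (hM : ∀ z, φ z ≤ M)
    (hstep : ∀ K, (∀ z, φ z ≤ K) → ∀ z, φ z ≤ c * K + d) (z : α) :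
    φ z ≤ d / (1 - c) := by
  set e := d / (1 - c)
  have he : c * e + d = e := by
    have : 1 - c ≠ 0 := (sub_pos.2 hc1).ne'
    simp only [e]; field_simp; ring
  have hiter : ∀ n : ℕ, ∀ z, φ z ≤ c ^ n * (M - e) + e := by
    intro n
    induction n with
    | zero => simpa using hM
    | succ n ih =>
      exact fun z => (hstep _ ih z).trans_eq (by rw [pow_succ]; linear_combination he)
  have hlim : Filter.Tendsto (fun n : ℕ => c ^ n * (M - e) + e) Filter.atTop (nhds e) := by
    simpa using ((tendsto_pow_atTop_nhds_zero_of_lt_one hc0 hc1).mul_const (M - e)).add_const e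
  exact ge_of_tendsto' hlim fun n => hiter n z

lemma norm_add_smul_sub_add_smul_le {F : Type*} [SeminormedAddCommGroup F] [NormedSpace ℝ F]
    (x y v w : F) {h : ℝ} (hh : 0 ≤ h) :
    ‖(x + h • v) - (y + h • w)‖ ≤ ‖x - y‖ + h * ‖v - w‖ := by
  calc ‖(x + h • v) - (y + h • w)‖ = ‖(x - y) + h • (v - w)‖ := by congr 1; module
    _ ≤ ‖x - y‖ + h * ‖v - w‖ := by
      grw [norm_add_le, norm_smul, Real.norm_of_nonneg hh]

/-- The bound on `|u(x,a) - u(y,a)|` with `‖x - y‖ = r` obtained after unrolling the fixed-point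
equation up to time `t`. -/
def incrementBound (lam Lg Lf B t r : ℝ) : ℝ :=
  Lf * (exp ((Lg - lam) * t) - 1) / (Lg - lam) * r + 2 * B * exp (-(lam * t))

section incrementBound

variable {lam Lg Lf B h t : ℝ}

@[simp]
lemma incrementBound_zero (r : ℝ) : incrementBound lam Lg Lf B 0 r = 2 * B := by
  simp [incrementBound]

lemma incrementBound_monotone (hlt : lam < Lg) (hLf : 0 ≤ Lf) (ht : 0 ≤ t) :
    Monotone (incrementBound lam Lg Lf B t) := by
  have hE : 0 ≤ exp ((Lg - lam) * t) - 1 := by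
    linarith [one_le_exp (mul_nonneg (sub_pos.2 hlt).le ht)]
  intro r r' hr
  unfold incrementBound
  gcongr

lemma incrementBound_step (hlam : 0 ≤ lam) (hlt : lam < Lg) (hLf : 0 ≤ Lf) (hB : 0 ≤ B)
    (hh : 0 ≤ h) (ht : 0 ≤ t) {r : ℝ} (hr : 0 ≤ r) :
    (1 - lam * h) * incrementBound lam Lg Lf B t ((1 + Lg * h) * r) + h * (Lf * r)
      ≤ incrementBound lam Lg Lf B (t + h) r := by
  have hμ : 0 < Lg - lam := sub_pos.2 hlt
  have hP : 1 - lam * h ≤ exp (-(lam * h)) := one_sub_le_exp_neg _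
  have hPQ : (1 - lam * h) * (1 + Lg * h) ≤ exp ((Lg - lam) * h) := by
    calc (1 - lam * h) * (1 + Lg * h) ≤ exp (-(lam * h)) * exp (Lg * h) := by
          gcongr
          · linarith [mul_nonneg (hlam.trans hlt.le) hh]
          · linarith [add_one_le_exp (Lg * h)]
      _ = exp ((Lg - lam) * h) := by rw [← exp_add]; ring_nf
  have hE : 0 ≤ exp ((Lg - lam) * t) - 1 := by linarith [one_le_exp (mul_nonneg hμ.le ht)]
  have hgrowth : (1 - lam * h) * (1 + Lg * h) * (exp ((Lg - lam) * t) - 1) + (Lg - lam) * h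
      ≤ exp ((Lg - lam) * h) * exp ((Lg - lam) * t) - 1 := by
    nlinarith [mul_le_mul_of_nonneg_right hPQ hE, add_one_le_exp ((Lg - lam) * h)]
  have hdecay : (1 - lam * h) * exp (-(lam * t)) ≤ exp (-(lam * h)) * exp (-(lam * t)) :=
    mul_le_mul_of_nonneg_right hP (exp_nonneg _)
  calc (1 - lam * h) * incrementBound lam Lg Lf B t ((1 + Lg * h) * r) + h * (Lf * r)
      = Lf * r / (Lg - lam) * ((1 - lam * h) * (1 + Lg * h) * (exp ((Lg - lam) * t) - 1)
          + (Lg - lam) * h) + 2 * B * ((1 - lam * h) * exp (-(lam * t))) := by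
        unfold incrementBound; field_simp; ring
    _ ≤ Lf * r / (Lg - lam) * (exp ((Lg - lam) * h) * exp ((Lg - lam) * t) - 1)
          + 2 * B * (exp (-(lam * h)) * exp (-(lam * t))) := by gcongr
    _ = incrementBound lam Lg Lf B (t + h) r := by
        unfold incrementBound; rw [← exp_add, ← exp_add]; ring_nf

end incrementBound

/-- The time `n h ≈ -log r / L_g` balances the growth `e^{(L_g - λ) t}` against the decay
`e^{-λ t}`; overshooting it by at most `h ≤ 1 / λ` costs the factor `e^{(L_g - λ) / λ}`. -/
lemma exists_nat_exp_sub_one_mul_le_and_exp_neg_le {lam Lg h r : ℝ} (hlam : 0 < lam)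
    (hlt : lam < Lg) (hh : 0 < h) (hlh : lam * h ≤ 1) (hr : 0 < r) :
    ∃ n : ℕ, (exp ((Lg - lam) * (n * h)) - 1) * r ≤ exp ((Lg - lam) / lam) * r ^ (lam / Lg) ∧
      exp (-(lam * (n * h))) ≤ r ^ (lam / Lg) := by
  have hLg : 0 < Lg := hlam.trans hlt
  rcases le_or_gt 1 r with hr1 | hr1
  · have hrγ : 1 ≤ r ^ (lam / Lg) := one_le_rpow hr1 (div_pos hlam hLg).le
    exact ⟨0, by simpa using by positivity, by simpa using hrγ⟩
  set s := -log r / Lg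
  have hs : 0 ≤ s := div_nonneg (neg_nonneg.2 (log_nonpos hr.le hr1.le)) hLg.le
  refine ⟨⌈s / h⌉₊, ?_⟩
  set t := (⌈s / h⌉₊ : ℝ) * h
  have hst : s ≤ t := (div_le_iff₀ hh).1 (Nat.le_ceil _)
  have hts : t ≤ s + 1 / lam := by
    have hceil := Nat.ceil_lt_add_one (div_nonneg hs hh.le)
    have : h ≤ 1 / lam := by rw [le_div_iff₀ hlam]; linarith
    calc t ≤ (s / h + 1) * h := mul_le_mul_of_nonneg_right hceil.le hh.le
      _ ≤ s + 1 / lam := by rw [add_mul, div_mul_cancel₀ _ hh.ne']; linarith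
  have hlogr : log r = -(Lg * s) := by simp only [s]; field_simp
  have hrγ : r ^ (lam / Lg) = exp (-(lam * s)) := by
    rw [rpow_def_of_pos hr, hlogr]; congr 1; field_simp
  constructor
  · calc (exp ((Lg - lam) * t) - 1) * r ≤ exp ((Lg - lam) * t) * r := by gcongr; linarith
      _ ≤ exp ((Lg - lam) * (s + 1 / lam)) * exp (log r) := by
          rw [exp_log hr]; gcongr
      _ = exp ((Lg - lam) / lam) * r ^ (lam / Lg) := by
          rw [hrγ, ← exp_add, ← exp_add, hlogr]; congr 1; field_simp; ring
  · rw [hrγ]; gcongr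

lemma exists_incrementBound_le {lam Lg Lf B h r : ℝ} (hlam : 0 < lam) (hlt : lam < Lg)
    (hLf : 0 ≤ Lf) (hB : 0 ≤ B) (hh : 0 < h) (hlh : lam * h ≤ 1) (hr : 0 < r) :
    ∃ n : ℕ, incrementBound lam Lg Lf B (n * h) r
      ≤ (Lf * exp ((Lg - lam) / lam) / (Lg - lam) + 2 * B) * r ^ (lam / Lg) := by
  obtain ⟨n, hgrowth, hdecay⟩ :=
    exists_nat_exp_sub_one_mul_le_and_exp_neg_le hlam hlt hh hlh hr
  have hLfμ : 0 ≤ Lf / (Lg - lam) := div_nonneg hLf (sub_pos.2 hlt).le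
  refine ⟨n, ?_⟩
  calc incrementBound lam Lg Lf B (n * h) r
      = Lf / (Lg - lam) * ((exp ((Lg - lam) * (n * h)) - 1) * r)
          + 2 * B * exp (-(lam * (n * h))) := by unfold incrementBound; ring
    _ ≤ Lf / (Lg - lam) * (exp ((Lg - lam) / lam) * r ^ (lam / Lg))
          + 2 * B * r ^ (lam / Lg) := by gcongr
    _ = (Lf * exp ((Lg - lam) / lam) / (Lg - lam) + 2 * B) * r ^ (lam / Lg) := by ring

section FixedPoint

variable {ν : ℕ} {lam h Lg Lf Mf M B : ℝ} {N : ℕ} {g : E ν → ℝ → E ν} {f : E ν → ℝ → ℝ}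
  {u : E ν → ℝ → ℝ}

lemma abs_le_div_of_eq_Aop (hlam : 0 < lam) (hh : 0 < h) (hlh : lam * h < 1)
    (hfb : ∀ x, ∀ a ∈ Ih h N, |f x a| ≤ Mf) (hM : ∀ x, ∀ a ∈ Ih h N, |u x a| ≤ M)
    (hu : ∀ x, ∀ a ∈ Ih h N, u x a = Aop lam h N g f u x a) (x : E ν) {a : ℝ}
    (ha : a ∈ Ih h N) : |u x a| ≤ Mf / lam := by
  have hP : 0 ≤ 1 - lam * h := by linarith
  have hbound := le_div_one_sub_of_forall_le_imp_le_mul_add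
    (φ := fun p : E ν × Ih h N => |u p.1 p.2|) (c := 1 - lam * h) (d := h * Mf) hP
    (by linarith [mul_pos hlam hh]) (fun p => hM p.1 p.2 p.2.2) ?_ (x, ⟨a, ha⟩)
  · rwa [sub_sub_cancel, mul_comm lam, mul_div_mul_left _ _ hh.ne'] at hbound
  rintro K hK ⟨x, a, ha⟩
  obtain ⟨b, hb, -, hAop⟩ := exists_Aop_eq (lam := lam) (g := g) (f := f) (w := u) (x := x) ha
  calc |u x a| = |(1 - lam * h) * u (x + h • g x a) b + h * f x a| := by rw [hu x a ha, hAop]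
    _ ≤ (1 - lam * h) * |u (x + h • g x a) b| + h * |f x a| := by
        grw [abs_add_le, abs_mul, abs_mul, abs_of_nonneg hP, abs_of_pos hh]
    _ ≤ (1 - lam * h) * K + h * Mf := by
        gcongr
        exacts [hK (_, ⟨b, hb⟩), hfb x a ha]

lemma exists_sub_le_of_eq_Aop (hu : ∀ x, ∀ a ∈ Ih h N, u x a = Aop lam h N g f u x a)
    (x y : E ν) {a : ℝ} (ha : a ∈ Ih h N) :
    ∃ b ∈ Ih h N, u x a - u y a ≤ (1 - lam * h) * (u (x + h • g x a) b - u (y + h • g y a) b)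
      + h * (f x a - f y a) := by
  obtain ⟨b, hb, hab, hAop⟩ := exists_Aop_eq (lam := lam) (g := g) (f := f) (w := u) (x := y) ha
  have hle := Aop_le (lam := lam) (g := g) (f := f) (w := u) (x := x) hb hab
  refine ⟨b, hb, ?_⟩
  rw [hu x a ha, hu y a ha, hAop]
  linarith

lemma abs_sub_le_incrementBound (hlam : 0 ≤ lam) (hlt : lam < Lg) (hh : 0 < h)
    (hlh : lam * h ≤ 1) (hLf : 0 ≤ Lf)
    (hg : ∀ x y, ∀ a ∈ Ih h N, ‖g x a - g y a‖ ≤ Lg * ‖x - y‖)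
    (hf : ∀ x y, ∀ a ∈ Ih h N, |f x a - f y a| ≤ Lf * ‖x - y‖)
    (hB : ∀ x, ∀ a ∈ Ih h N, |u x a| ≤ B)
    (hu : ∀ x, ∀ a ∈ Ih h N, u x a = Aop lam h N g f u x a) (n : ℕ) (x y : E ν) {a : ℝ}
    (ha : a ∈ Ih h N) : |u x a - u y a| ≤ incrementBound lam Lg Lf B (n * h) ‖x - y‖ := by
  have hB0 : 0 ≤ B := (abs_nonneg _).trans (hB 0 0 (zero_mem_Ih h N))
  induction n generalizing x y a with
  | zero => simpa [two_mul] using (abs_sub _ _).trans (add_le_add (hB x a ha) (hB y a ha))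
  | succ n ih =>
    have hstep : ∀ x y : E ν,
        u x a - u y a ≤ incrementBound lam Lg Lf B ((n + 1 : ℕ) * h) ‖x - y‖ := by
      intro x y
      obtain ⟨b, hb, hle⟩ := exists_sub_le_of_eq_Aop hu x y ha
      have hdist : ‖(x + h • g x a) - (y + h • g y a)‖ ≤ (1 + Lg * h) * ‖x - y‖ := by
        grw [norm_add_smul_sub_add_smul_le _ _ _ _ hh.le, hg x y a ha]
        exact le_of_eq (by ring)
      calc u x a - u y a
          ≤ (1 - lam * h) * (u (x + h • g x a) b - u (y + h • g y a) b)
            + h * (f x a - f y a) := hle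
        _ ≤ (1 - lam * h) * incrementBound lam Lg Lf B (n * h) ((1 + Lg * h) * ‖x - y‖)
            + h * (Lf * ‖x - y‖) := by
          gcongr
          · exact (le_abs_self _).trans <| (ih _ _ hb).trans <|
              incrementBound_monotone hlt hLf (by positivity) hdist
          · exact (le_abs_self _).trans (hf x y a ha)
        _ ≤ incrementBound lam Lg Lf B (n * h + h) ‖x - y‖ :=
          incrementBound_step hlam hlt hLf hB0 hh.le (by positivity) (norm_nonneg _)
        _ = incrementBound lam Lg Lf B ((n + 1 : ℕ) * h) ‖x - y‖ := by push_cast; ring_nf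
    have hstep' := hstep y x
    rw [norm_sub_rev] at hstep'
    exact abs_sub_le_iff.2 ⟨hstep x y, hstep'⟩

end FixedPoint

theorem Ah_fixed_point_holder_general {ν : ℕ}
    (lam Lg Mg Lf Mf : ℝ) (hlam : 0 < lam)
    (hLf : 0 < Lf) (hMf : 0 < Mf)
    (hlt : lam < Lg) :
    ∃ C : ℝ, 0 < C ∧
      ∀ (g : E ν → ℝ → E ν) (f : E ν → ℝ → ℝ),
        (∀ x x' : E ν, ∀ a ∈ Set.Icc (0:ℝ) 1, ∀ a' ∈ Set.Icc (0:ℝ) 1,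
          ‖g x a - g x' a'‖ ≤ Lg * (‖x - x'‖ + |a - a'|)) →
        (∀ x : E ν, ∀ a ∈ Set.Icc (0:ℝ) 1, ‖g x a‖ ≤ Mg) →
        (∀ x x' : E ν, ∀ a ∈ Set.Icc (0:ℝ) 1, ∀ a' ∈ Set.Icc (0:ℝ) 1,
          |f x a - f x' a'| ≤ Lf * (‖x - x'‖ + |a - a'|)) →
        (∀ x : E ν, ∀ a ∈ Set.Icc (0:ℝ) 1, |f x a| ≤ Mf) →
        ∀ (h : ℝ) (N : ℕ), 0 < h → h < 1 / lam → 0 < N → (N : ℝ) * h = 1 →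
        ∀ u : E ν → ℝ → ℝ,
          (∃ M : ℝ, ∀ x : E ν, ∀ a ∈ Ih h N, |u x a| ≤ M) →
          (∀ x : E ν, ∀ a ∈ Ih h N, u x a = Aop lam h N g f u x a) →
          ∀ x y : E ν, ∀ a ∈ Ih h N,
            |u x a - u y a| ≤ C * ‖x - y‖ ^ (lam / Lg) := by
  have hμ : 0 < Lg - lam := sub_pos.2 hlt
  refine ⟨Lf * exp ((Lg - lam) / lam) / (Lg - lam) + 2 * (Mf / lam), by positivity, ?_⟩
  intro g f hg _ hf hfb h N hh hhl _ hNh u ⟨M, hM⟩ hu x y a ha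
  have hIcc := Ih_subset_Icc hh.le hNh
  have hlh : lam * h < 1 := by rwa [lt_div_iff₀ hlam, mul_comm] at hhl
  have hB := abs_le_div_of_eq_Aop hlam hh hlh (fun x a ha => hfb x a (hIcc ha)) hM hu
  have hincr := abs_sub_le_incrementBound hlam.le hlt hh hlh.le hLf.le
    (fun x y a ha => by simpa using hg x y a (hIcc ha) a (hIcc ha))
    (fun x y a ha => by simpa using hf x y a (hIcc ha) a (hIcc ha)) hB hu
  rcases eq_or_ne x y with rfl | hxy
  · simp only [sub_self, abs_zero]; positivity
  obtain ⟨n, hn⟩ := exists_incrementBound_le hlam hlt hLf.le (div_pos hMf hlam).le hh hlh.le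
    (norm_pos_iff.2 (sub_ne_zero.2 hxy))
  exact (hincr n x y ha).trans hn

theorem Ah_fixed_point_holder {ν : ℕ} (hν : 1 ≤ ν)
    (lam Lg Mg Lf Mf : ℝ) (hlam : 0 < lam)
    (hLg : 0 < Lg) (hMg : 0 < Mg) (hLf : 0 < Lf) (hMf : 0 < Mf)
    (hlt : lam < Lg) :
    ∃ C : ℝ, 0 < C ∧
      ∀ (g : E ν → ℝ → E ν) (f : E ν → ℝ → ℝ),
        (∀ x x' : E ν, ∀ a ∈ Set.Icc (0:ℝ) 1, ∀ a' ∈ Set.Icc (0:ℝ) 1,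
          ‖g x a - g x' a'‖ ≤ Lg * (‖x - x'‖ + |a - a'|)) →
        (∀ x : E ν, ∀ a ∈ Set.Icc (0:ℝ) 1, ‖g x a‖ ≤ Mg) →
        (∀ x x' : E ν, ∀ a ∈ Set.Icc (0:ℝ) 1, ∀ a' ∈ Set.Icc (0:ℝ) 1,
          |f x a - f x' a'| ≤ Lf * (‖x - x'‖ + |a - a'|)) →
        (∀ x : E ν, ∀ a ∈ Set.Icc (0:ℝ) 1, |f x a| ≤ Mf) →
        ∀ (h : ℝ) (N : ℕ), 0 < h → h < 1 / lam → 0 < N → (N : ℝ) * h = 1 →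
        ∀ u : E ν → ℝ → ℝ,
          (∃ M : ℝ, ∀ x : E ν, ∀ a ∈ Ih h N, |u x a| ≤ M) →
          (∀ x : E ν, ∀ a ∈ Ih h N, u x a = Aop lam h N g f u x a) →
          ∀ x y : E ν, ∀ a ∈ Ih h N,
            |u x a - u y a| ≤ C * ‖x - y‖ ^ (lam / Lg) :=
  Ah_fixed_point_holder_general lam Lg Mg Lf Mf hlam hLf hMf hlt
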